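/- If T is an (ι,1)-critical tree, then T has exactly one minimum isolating set. -/

import Mathlib

open SimpleGraph

/-- `v` lies in the closed neighbourhood of the set `D`. -/
def inClosedNbhd {V : Type*} (G : SimpleGraph V) (D : Set V) (v : V) : Prop :=
  ∃ d ∈ D, d = v ∨ G.Adj d v

/-- `D` is an isolating set of `G`: the graph induced on the vertices outside
`N[D]` has no edges. -/
def IsIsolating {V : Type*} (G : SimpleGraph V) (D : Set V) : Prop :=
  ∀ u v : V, G.Adj u v → inClosedNbhd G D u ∨ inClosedNbhd G D v

/-- The isolation number of a finite graph. -/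
noncomputable def iso {V : Type*} (G : SimpleGraph V) [Fintype V] : ℕ :=
  sInf {n | ∃ D : Finset V, D.card = n ∧ IsIsolating G ↑D}

/-- The graph obtained from `G` by subdividing each edge in `A` once; the new
(subdivision) vertices are the elements of `A`. -/
def subdivide {V : Type*} (G : SimpleGraph V) (A : Finset (Sym2 V)) :
    SimpleGraph (V ⊕ {e : Sym2 V // e ∈ A}) where
  Adj x y :=
    match x, y with
    | Sum.inl u, Sum.inl v => G.Adj u v ∧ s(u, v) ∉ A
    | Sum.inl u, Sum.inr e => u ∈ (e : Sym2 V)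
    | Sum.inr e, Sum.inl u => u ∈ (e : Sym2 V)
    | Sum.inr _, Sum.inr _ => False
  symm := by
    constructor
    rintro (u | e) (v | f) h <;> dsimp only at h ⊢ <;>
      first
        | exact ⟨h.1.symm, by rw [Sym2.eq_swap]; exact h.2⟩
        | exact h
        | exact h.elim
  loopless := by
    constructor
    rintro (u | e) h <;> dsimp only at h <;>
      first
        | exact G.loopless.irrefl u h.1
        | exact h

/-- A graph is `(ι,q)`-critical. -/
def IotaCritical {V : Type*} (G : SimpleGraph V) [Fintype V] (q : ℕ) : Prop :=
  (∀ A : Finset (Sym2 V), ↑A ⊆ G.edgeSet → A.card = q →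
      iso G < iso (subdivide G A)) ∧
  (∃ A : Finset (Sym2 V), ↑A ⊆ G.edgeSet ∧ A.card = q - 1 ∧
      iso (subdivide G A) = iso G)

/-!
Subdividing an edge `e` of a critical tree `T` raises `ι`, so no set of `ι(T)` vertices isolates
`T - e` while also covering the two new edges at the subdivision vertex. Applied to a minimum
isolating set `D`, this shows that a neighbour of a vertex `d ∈ D` has no dominator other than `d`,
that every neighbour of `D` has a neighbour outside `N[D]`, and that no edge joins two vertices of
`N[D] \ D`; an exchange argument then shows that `D` has no leaves. Given two different minimum
isolating sets, these local rules extend a non-backtracking walk forever, which is impossible in a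
finite tree.
-/

open Finset

namespace SimpleGraph

/-- A non-backtracking walk in a forest is a path, so in a finite forest it cannot be extended
forever. -/
theorem IsAcyclic.not_rel_of_forall_exists_rel {V : Type*} [Fintype V] {G : SimpleGraph V}
    (hG : G.IsAcyclic) {P : V → V → Prop} (hP : ∀ u v, P u v → G.Adj u v)
    (hext : ∀ u v, P u v → ∃ w, w ≠ u ∧ P v w) (u v : V) : ¬ P u v := by
  intro huv
  have long_path : ∀ n, ∃ u v x, ∃ p : G.Walk v x,
      P u v ∧ p.IsPath ∧ p.snd = u ∧ n ≤ p.length := by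
    intro n
    induction n with
    | zero =>
      have hvu := (hP u v huv).symm
      exact ⟨u, v, u, .cons hvu .nil, huv, .cons .nil (by simpa using hvu.ne), rfl, by simp⟩
    | succ n ih =>
      obtain ⟨u, v, x, p, hP_uv, hp, hsnd, hlen⟩ := ih
      obtain ⟨w, hwu, hP_vw⟩ := hext u v hP_uv
      have hvw := hP v w hP_vw
      refine ⟨v, w, x, .cons hvw.symm p, hP_vw, hp.cons ?_, by simp, by simp; omega⟩
      exact fun hw => hwu (hsnd ▸ hG.eq_snd_of_adj_start hp hvw hw)
  obtain ⟨_, _, _, p, -, hp, -, hlen⟩ := long_path (Fintype.card V)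
  exact absurd hp.length_lt (by omega)

end SimpleGraph

section Isolation

variable {V : Type*} {G : SimpleGraph V} {D : Set V} {d x : V}

theorem inClosedNbhd_of_mem (hx : x ∈ D) : inClosedNbhd G D x :=
  ⟨x, hx, Or.inl rfl⟩

theorem inClosedNbhd_of_adj (hd : d ∈ D) (hdx : G.Adj d x) : inClosedNbhd G D x :=
  ⟨d, hd, Or.inr hdx⟩

theorem inClosedNbhd_deleteEdges_singleton {e : Sym2 V} (hd : d ∈ D) (hdx : d = x ∨ G.Adj d x)
    (he : s(d, x) ≠ e) : inClosedNbhd (G.deleteEdges {e}) D x := by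
  rcases hdx with rfl | hdx
  · exact inClosedNbhd_of_mem hd
  · exact inClosedNbhd_of_adj hd (by simp [hdx, he])

theorem IsIsolating.exists_adj_mem {u v : V} (hD : IsIsolating G D)
    (hu : ¬ inClosedNbhd G D u) (huv : G.Adj u v) : ∃ w ∈ D, G.Adj v w := by
  obtain ⟨w, hw, rfl | hwv⟩ := (hD u v huv).resolve_left hu
  · exact absurd (inClosedNbhd_of_adj hw huv.symm) hu
  · exact ⟨w, hw, hwv.symm⟩

@[simp]
theorem subdivide_adj_inl_inl {A : Finset (Sym2 V)} {u v : V} :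
    (subdivide G A).Adj (Sum.inl u) (Sum.inl v) ↔ G.Adj u v ∧ s(u, v) ∉ A :=
  Iff.rfl

theorem IsIsolating.deleteEdges {s : Set (Sym2 V)} (hD : IsIsolating G D)
    (h : ∀ x, inClosedNbhd G D x → inClosedNbhd (G.deleteEdges s) D x) :
    IsIsolating (G.deleteEdges s) D :=
  fun u v huv => (hD u v huv.1).imp (h u) (h v)

/-- The new vertex of `subdivide G {e}` is dominated by `D` exactly when an end of `e` lies in
`D`, while an old vertex keeps only the dominators that do not use the edge `e`. -/
theorem IsIsolating.subdivide_singleton {e : Sym2 V} (hD : IsIsolating (G.deleteEdges {e}) D)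
    (he : (∃ u ∈ e, u ∈ D) ∨ ∀ v ∈ e, inClosedNbhd (G.deleteEdges {e}) D v) :
    IsIsolating (subdivide G {e}) (Sum.inl '' D) := by
  have old : ∀ x, inClosedNbhd (G.deleteEdges {e}) D x →
      inClosedNbhd (subdivide G {e}) (Sum.inl '' D) (Sum.inl x) := by
    rintro x ⟨d, hd, rfl | hdx⟩
    · exact inClosedNbhd_of_mem (Set.mem_image_of_mem _ hd)
    · exact inClosedNbhd_of_adj (Set.mem_image_of_mem _ hd) (by simpa using hdx)
  have new : ∀ w : {e' // e' ∈ ({e} : Finset (Sym2 V))}, (∃ u ∈ e, u ∈ D) →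
      inClosedNbhd (subdivide G {e}) (Sum.inl '' D) (Sum.inr w) := by
    rintro ⟨w, hw⟩ ⟨u, hue, hu⟩
    rw [Finset.mem_singleton] at hw
    subst hw
    exact inClosedNbhd_of_adj (Set.mem_image_of_mem _ hu) hue
  have ends : ∀ x, ∀ w : {e' // e' ∈ ({e} : Finset (Sym2 V))}, x ∈ w.val →
      inClosedNbhd (subdivide G {e}) (Sum.inl '' D) (Sum.inl x) ∨
        inClosedNbhd (subdivide G {e}) (Sum.inl '' D) (Sum.inr w) := by
    rintro x ⟨w, hw⟩ hx
    rw [Finset.mem_singleton] at hw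
    subst hw
    exact he.elim (fun h => .inr (new _ h)) (fun h => .inl (old x (h x hx)))
  rintro (x | w) (y | w') hxy
  · exact (hD x y (by simpa using hxy)).imp (old x) (old y)
  · exact ends x w' hxy
  · exact (ends y w hxy).symm
  · exact hxy.elim

end Isolation

section MinIsolating

variable {V : Type*} [Fintype V] {G : SimpleGraph V}

def IsMinIsolating (G : SimpleGraph V) (D : Finset V) : Prop :=
  IsIsolating G ↑D ∧ D.card = iso G

theorem iso_le_card {D : Finset V} (hD : IsIsolating G ↑D) : iso G ≤ D.card :=
  Nat.sInf_le ⟨D, rfl, hD⟩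

theorem exists_isMinIsolating (G : SimpleGraph V) : ∃ D, IsMinIsolating G D := by
  obtain ⟨D, hcard, hD⟩ := Nat.sInf_mem (s := {n | ∃ D : Finset V, D.card = n ∧ IsIsolating G ↑D})
    ⟨_, univ, rfl, fun u _ _ => .inl (inClosedNbhd_of_mem (mem_univ u))⟩
  exact ⟨D, hD, hcard⟩

theorem IsMinIsolating.of_card_le {D : Finset V} (hD : IsIsolating G ↑D) (hcard : D.card ≤ iso G) :
    IsMinIsolating G D :=
  ⟨hD, le_antisymm hcard (iso_le_card hD)⟩

theorem IsMinIsolating.exists_adj {D : Finset V} (hD : IsMinIsolating G D) {d : V} (hd : d ∈ D) :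
    ∃ v, G.Adj d v := by
  classical
  by_contra! hdeg
  have hcover : ∀ x, inClosedNbhd G ↑D x → (x = d ∨ inClosedNbhd G ↑(D.erase d) x) := by
    rintro x ⟨dx, hdx, hx⟩
    by_cases hdxd : dx = d
    · subst hdxd
      exact .inl (hx.resolve_right (hdeg x)).symm
    · exact .inr ⟨dx, mem_erase.2 ⟨hdxd, hdx⟩, hx⟩
  have hDe : IsIsolating G ↑(D.erase d) := by
    intro x y hxy
    rcases hD.1 x y hxy with hx | hy
    · exact (hcover x hx).elim (fun h => absurd (h ▸ hxy) (hdeg y)) .inl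
    · exact (hcover y hy).elim (fun h => absurd (h ▸ hxy.symm) (hdeg x)) .inr
  have hle := iso_le_card hDe
  rw [card_erase_of_mem hd, ← hD.2] at hle
  have := card_pos.2 ⟨d, hd⟩
  omega

/-- Since `N[d] ⊆ N[v]`, trading `d` for `v` keeps the set isolating. -/
theorem IsMinIsolating.exchange_leaf [DecidableEq V] {D : Finset V} (hD : IsMinIsolating G D)
    {d v : V} (hd : d ∈ D) (hleaf : ∀ w, G.Adj d w → w = v) :
    IsMinIsolating G (insert v (D.erase d)) := by
  have hv : inClosedNbhd G ↑(insert v (D.erase d)) v := inClosedNbhd_of_mem (mem_insert_self v _)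
  have hcover : ∀ x y, G.Adj x y → inClosedNbhd G ↑D x →
      inClosedNbhd G ↑(insert v (D.erase d)) x ∨ inClosedNbhd G ↑(insert v (D.erase d)) y := by
    rintro x y hxy ⟨dx, hdx, hx⟩
    by_cases hdxd : dx = d
    · subst hdxd
      rcases hx with rfl | hx
      · exact .inr (hleaf y hxy ▸ hv)
      · exact .inl (hleaf x hx ▸ hv)
    · exact .inl ⟨dx, mem_insert_of_mem (mem_erase.2 ⟨hdxd, hdx⟩), hx⟩
  refine .of_card_le (fun x y hxy => ?_) ?_
  · rcases hD.1 x y hxy with hx | hy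
    · exact hcover x y hxy hx
    · exact (hcover y x hxy.symm hy).symm
  · calc (insert v (D.erase d)).card ≤ (D.erase d).card + 1 := card_insert_le _ _
      _ = D.card := card_erase_add_one hd
      _ = iso G := hD.2

end MinIsolating

section Critical

variable {V : Type*} [Fintype V] {T : SimpleGraph V}
  (hcrit : ∀ e ∈ T.edgeSet, iso T < iso (subdivide T {e}))
include hcrit

theorem iso_lt_card_of_isIsolating_deleteEdges {D : Finset V} {e : Sym2 V} (he : e ∈ T.edgeSet)
    (hD : IsIsolating (T.deleteEdges {e}) ↑D)
    (hcov : (∃ u ∈ e, u ∈ D) ∨ ∀ v ∈ e, inClosedNbhd (T.deleteEdges {e}) ↑D v) :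
    iso T < D.card := by
  classical
  let S : Finset (V ⊕ {x // x ∈ ({e} : Finset (Sym2 V))}) := D.image Sum.inl
  have hsub : IsIsolating (subdivide T {e}) ↑S := by
    rw [coe_image]
    exact hD.subdivide_singleton hcov
  calc iso T < iso (subdivide T {e}) := hcrit e he
    _ ≤ S.card := iso_le_card hsub
    _ = D.card := card_image_of_injective _ Sum.inl_injective

namespace IsMinIsolating

variable {D : Finset V} (hD : IsMinIsolating T D)
include hD

theorem eq_of_adj_of_dominates {d v d' : V} (hd : d ∈ D) (hdv : T.Adj d v) (hd' : d' ∈ D)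
    (hd'v : d' = v ∨ T.Adj d' v) : d' = d := by
  by_contra hne
  have hv : inClosedNbhd (T.deleteEdges {s(d, v)}) ↑D v := by
    refine inClosedNbhd_deleteEdges_singleton hd' hd'v fun h => ?_
    rcases Sym2.eq_iff.1 h with ⟨h, -⟩ | ⟨rfl, rfl⟩
    exacts [hne h, hdv.ne rfl]
  have hDe : IsIsolating (T.deleteEdges {s(d, v)}) ↑D := by
    refine hD.1.deleteEdges fun x ⟨dx, hdx, hx⟩ => ?_
    by_cases hE : s(dx, x) = s(d, v)
    · rcases Sym2.eq_iff.1 hE with ⟨-, rfl⟩ | ⟨-, rfl⟩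
      exacts [hv, inClosedNbhd_of_mem hd]
    · exact inClosedNbhd_deleteEdges_singleton hdx hx hE
  exact (iso_lt_card_of_isIsolating_deleteEdges hcrit hdv hDe
    (.inl ⟨d, Sym2.mem_mk_left d v, hd⟩)).ne' hD.2

theorem exists_adj_not_inClosedNbhd {d v : V} (hd : d ∈ D) (hdv : T.Adj d v) :
    ∃ x, T.Adj v x ∧ ¬ inClosedNbhd T ↑D x := by
  by_contra! hv
  have away : ∀ z, z ≠ v → inClosedNbhd T ↑D z → inClosedNbhd (T.deleteEdges {s(d, v)}) ↑D z := by
    rintro z hzv ⟨dz, hdz, hz⟩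
    by_cases hE : s(dz, z) = s(d, v)
    · rcases Sym2.eq_iff.1 hE with ⟨-, rfl⟩ | ⟨-, rfl⟩
      exacts [absurd rfl hzv, inClosedNbhd_of_mem hd]
    · exact inClosedNbhd_deleteEdges_singleton hdz hz hE
  have hDe : IsIsolating (T.deleteEdges {s(d, v)}) ↑D := by
    intro x y hxy
    have hxy' := (T.deleteEdges_adj.1 hxy).1
    by_cases hx : x = v
    · subst hx
      exact .inr (away y hxy'.ne' (hv y hxy'))
    by_cases hy : y = v
    · subst hy
      exact .inl (away x hx (hv x hxy'.symm))
    exact (hD.1 x y hxy').imp (away x hx) (away y hy)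
  exact (iso_lt_card_of_isIsolating_deleteEdges hcrit hdv hDe
    (.inl ⟨d, Sym2.mem_mk_left d v, hd⟩)).ne' hD.2

theorem not_inClosedNbhd_of_adj {a b : V} (hab : T.Adj a b) (ha : a ∉ D) (hb : b ∉ D)
    (hca : inClosedNbhd T ↑D a) : ¬ inClosedNbhd T ↑D b := by
  intro hcb
  have keep : ∀ x, inClosedNbhd T ↑D x → inClosedNbhd (T.deleteEdges {s(a, b)}) ↑D x := by
    rintro x ⟨dx, hdx, hx⟩
    refine inClosedNbhd_deleteEdges_singleton hdx hx fun hE => ?_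
    rcases Sym2.mem_iff.1 (hE ▸ Sym2.mem_mk_left dx x) with rfl | rfl
    exacts [ha hdx, hb hdx]
  have hcov : ∀ v ∈ s(a, b), inClosedNbhd (T.deleteEdges {s(a, b)}) ↑D v := by
    intro v hv
    rcases Sym2.mem_iff.1 hv with rfl | rfl
    exacts [keep v hca, keep v hcb]
  exact (iso_lt_card_of_isIsolating_deleteEdges hcrit hab (hD.1.deleteEdges keep)
    (.inr hcov)).ne' hD.2

theorem exists_adj_ne {d v : V} (hd : d ∈ D) (hdv : T.Adj d v) : ∃ w, T.Adj d w ∧ w ≠ v := by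
  classical
  by_contra! hleaf
  obtain ⟨x, hdx, hx⟩ := (hD.exchange_leaf hd hleaf).exists_adj_not_inClosedNbhd hcrit
    (mem_insert_self v _) hdv.symm
  rw [hleaf x hdx] at hx
  exact hx (inClosedNbhd_of_mem (mem_insert_self v _))

theorem exists_adj_mem_not_inClosedNbhd {D' : Finset V} (hD' : IsMinIsolating T D') {p q : V}
    (hp : p ∈ D) (hp' : ¬ inClosedNbhd T ↑D' p) (hpq : T.Adj p q) :
    ∃ r, T.Adj q r ∧ r ≠ p ∧ r ∈ D' ∧ ¬ inClosedNbhd T ↑D r := by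
  obtain ⟨r, hr, hqr⟩ := hD'.1.exists_adj_mem hp' hpq
  have hrp : r ≠ p := fun h => hp' (h ▸ inClosedNbhd_of_mem hr)
  have hq : q ∉ D := fun hq => hpq.ne (hD.eq_of_adj_of_dominates hcrit hp hpq hq (.inl rfl)).symm
  have hrD : r ∉ D := fun hrD => hrp (hD.eq_of_adj_of_dominates hcrit hp hpq hrD (.inr hqr.symm))
  exact ⟨r, hqr, hrp, hr, hD.not_inClosedNbhd_of_adj hcrit hqr hq hrD
    (inClosedNbhd_of_adj hp hpq)⟩

end IsMinIsolating

/-- If `u ∈ E`, a neighbour `w` of `v` outside `N[E]` exists by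
`exists_adj_not_inClosedNbhd`; if `u ∉ N[E]`, the edge `uv` forces a neighbour `w ∈ E` of `v`.
Either way the edge `vw` is again of the same kind, so such edges would go on forever. -/
theorem not_adj_of_mem_or_not_inClosedNbhd (hT : T.IsAcyclic) {u v : V}
    (hu : ∃ E, IsMinIsolating T E ∧ (u ∈ E ∨ ¬ inClosedNbhd T ↑E u))
    (hv : ∃ E, IsMinIsolating T E ∧ (v ∈ E ∨ ¬ inClosedNbhd T ↑E v)) : ¬ T.Adj u v := by
  intro huv
  refine hT.not_rel_of_forall_exists_rel (P := fun u v => T.Adj u v ∧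
      (∃ E, IsMinIsolating T E ∧ (u ∈ E ∨ ¬ inClosedNbhd T ↑E u)) ∧
      (∃ E, IsMinIsolating T E ∧ (v ∈ E ∨ ¬ inClosedNbhd T ↑E v)))
    (fun _ _ h => h.1) ?_ u v ⟨huv, hu, hv⟩
  rintro u v ⟨huv, ⟨E, hE, hu | hu⟩, hv⟩
  · obtain ⟨w, hvw, hw⟩ := hE.exists_adj_not_inClosedNbhd hcrit hu huv
    exact ⟨w, fun h => hw (h ▸ inClosedNbhd_of_mem hu), hvw, hv, E, hE, .inr hw⟩
  · obtain ⟨w, hw, hvw⟩ := hE.1.exists_adj_mem hu huv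
    exact ⟨w, fun h => hu (h ▸ inClosedNbhd_of_mem hw), hvw, hv, E, hE, .inl hw⟩

/-- Such a vertex is not a leaf, and behind each further neighbour there is a vertex of the same
kind with the roles of `E` and `E'` swapped. -/
theorem not_adj_of_mem_of_not_inClosedNbhd (hT : T.IsAcyclic) {E E' : Finset V}
    (hE : IsMinIsolating T E) (hE' : IsMinIsolating T E') {u v : V} (hu : u ∈ E)
    (hu' : ¬ inClosedNbhd T ↑E' u) : ¬ T.Adj u v := by
  intro huv
  refine hT.not_rel_of_forall_exists_rel (P := fun u v => T.Adj u v ∧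
      ((∃ E E', IsMinIsolating T E ∧ IsMinIsolating T E' ∧ u ∈ E ∧ ¬ inClosedNbhd T ↑E' u) ∨
        (∃ E E', IsMinIsolating T E ∧ IsMinIsolating T E' ∧ v ∈ E ∧ ¬ inClosedNbhd T ↑E' v)))
    (fun _ _ h => h.1) ?_ u v ⟨huv, .inl ⟨E, E', hE, hE', hu, hu'⟩⟩
  rintro u v ⟨huv, ⟨E, E', hE, hE', hu, hu'⟩ | ⟨E, E', hE, hE', hv, hv'⟩⟩
  · obtain ⟨r, hvr, hru, hr, hr'⟩ := hE.exists_adj_mem_not_inClosedNbhd hcrit hE' hu hu' huv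
    exact ⟨r, hru, hvr, .inr ⟨E', E, hE', hE, hr, hr'⟩⟩
  · obtain ⟨w, hvw, hwu⟩ := hE.exists_adj_ne hcrit hv huv.symm
    exact ⟨w, hwu, hvw, .inl ⟨E, E', hE, hE', hv, hv'⟩⟩

theorem IsMinIsolating.subset (hT : T.IsAcyclic) {D D' : Finset V} (hD : IsMinIsolating T D)
    (hD' : IsMinIsolating T D') : D ⊆ D' := by
  intro d hd
  by_contra hd'
  by_cases hdom : inClosedNbhd T ↑D' d
  · obtain ⟨a, ha, rfl | had⟩ := hdom
    · exact hd' ha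
    · exact not_adj_of_mem_or_not_inClosedNbhd hcrit hT ⟨D', hD', .inl ha⟩ ⟨D, hD, .inl hd⟩ had
  · obtain ⟨v, hdv⟩ := hD.exists_adj hd
    exact not_adj_of_mem_of_not_inClosedNbhd hcrit hT hD hD' hd hdom hdv

end Critical

theorem stmt19 {V : Type*} [Fintype V] (T : SimpleGraph V) (hT : T.IsTree)
    (hcrit : ∀ e ∈ T.edgeSet, iso T < iso (subdivide T {e})) :
    ∃! D : Finset V, IsIsolating T ↑D ∧ D.card = iso T := by
  obtain ⟨D, hD⟩ := exists_isMinIsolating T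
  refine ⟨D, hD, fun D' (hD' : IsMinIsolating T D') => ?_⟩
  exact (hD'.subset hcrit hT.isAcyclic hD).antisymm (hD.subset hcrit hT.isAcyclic hD')
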